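/- (Product states on twisted sums of symplectic spaces.) Let H and L be real vector spaces, σ_H and σ_L alternating ℝ-bilinear forms on H and L respectively, and α : H × L → ℝ a bilinear map. Define on V := H × L the alternating form σ_V((h,l),(h′,l′)) := σ_H(h,h′) + σ_L(l,l′) + α(h,l′) − α(h′,l), and set L₀ := {l ∈ L : α(h,l) = 0 for all h ∈ H}. If φ_H : H → ℂ is σ_H-positive-definite and φ_L : L → ℂ is σ_L-positive-definite with φ_L(l) = 0 for every l ∉ L₀, then φ(h,l) := φ_H(h)·φ_L(l) is σ_V-positive-definite. (Hence ω(W(h⊕l)) := ω_H(W(h))·ω_L(W(l)) defines a state on the Weyl algebra of the twisted sum (V, σ_V).) -/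

import Mathlib

open scoped ComplexConjugate

/-- `φ` is a `σ`-positive-definite function on `V`: for every finite family `v`, `a`,
the Weyl-kernel quadratic sum is a nonnegative real number.  Such functions with
`φ(0) = 1` correspond exactly to states on the Weyl algebra `W(V,σ)`. -/
def SigmaPosDef {V : Type*} [AddCommGroup V] [Module ℝ V]
    (σ : V → V → ℝ) (φ : V → ℂ) : Prop :=
  ∀ (n : ℕ) (v : Fin n → V) (a : Fin n → ℂ),
    0 ≤ (∑ i : Fin n, ∑ j : Fin n, conj (a i) * a j *
          Complex.exp (Complex.I / 2 * ((σ (v i) (v j) : ℝ) : ℂ)) *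
          φ (v j - v i)).re ∧
    (∑ i : Fin n, ∑ j : Fin n, conj (a i) * a j *
          Complex.exp (Complex.I / 2 * ((σ (v i) (v j) : ℝ) : ℂ)) *
          φ (v j - v i)).im = 0

/-!
Write `v_i = (h_i, l_i)`. Off the set where `α(·, l_i) = α(·, l_j)` the factor `φ_L(l_j - l_i)`
vanishes, and on it the cross terms `α(h_i, l_j) - α(h_j, l_i)` of `σ_V` reduce to
`α(h_i, l_i) - α(h_j, l_j)`. Hence the Weyl kernel of `φ` for `σ_V` is the Hadamard product of the
kernels of `φ_H` and `φ_L` with the Gram matrix of the vectors `exp(-(𝐢/2) α(h_i, l_i)) δ_{α(·, l_i)}`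
in `ℓ²`, and the Schur product theorem applies.
-/

open scoped Matrix ComplexOrder InnerProductSpace

open Complex in
/-- Over `ℂ`, reality of the quadratic form already forces `M` to be Hermitian. -/
theorem Matrix.posSemidef_of_forall_star_dotProduct_mulVec_nonneg {ι : Type*} [Fintype ι]
    [DecidableEq ι] {M : Matrix ι ι ℂ} (h : ∀ x, 0 ≤ star x ⬝ᵥ (M *ᵥ x)) : M.PosSemidef := by
  refine .of_dotProduct_mulVec_nonneg (isSymmetric_toEuclideanLin_iff.1 ?_) h
  refine (LinearMap.isSymmetric_iff_inner_map_self_real _).2 fun x => ?_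
  have hx : ⟪x, M.toEuclideanLin x⟫_ℂ = star x.ofLp ⬝ᵥ (M *ᵥ x.ofLp) := by
    simp [EuclideanSpace.inner_eq_star_dotProduct, dotProduct_comm]
  rw [← inner_conj_symm, conj_conj, hx, eq_comm, conj_eq_iff_im]
  exact (nonneg_iff.1 (h x.ofLp)).2.symm

theorem lp.inner_single_single {K : Type*} [DecidableEq K] (k k' : K) (z z' : ℂ) :
    ⟪(lp.single 2 k z : lp (fun _ : K => ℂ) 2), lp.single 2 k' z'⟫_ℂ =
      if k = k' then conj z * z' else 0 := by
  rw [lp.inner_single_left, lp.single_apply]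
  simp [Pi.single_apply, mul_comm]

section WeylKernel

variable {V ι : Type*} [AddCommGroup V]

noncomputable def weylKernel (σ : V → V → ℝ) (φ : V → ℂ) (v : ι → V) : Matrix ι ι ℂ :=
  Matrix.of fun i j => Complex.exp (Complex.I / 2 * (σ (v i) (v j) : ℂ)) * φ (v j - v i)

theorem star_dotProduct_weylKernel_mulVec [Fintype ι] (σ : V → V → ℝ) (φ : V → ℂ) (v : ι → V)
    (a : ι → ℂ) :
    star a ⬝ᵥ (weylKernel σ φ v *ᵥ a) =
      ∑ i, ∑ j, conj (a i) * a j *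
        Complex.exp (Complex.I / 2 * (σ (v i) (v j) : ℂ)) * φ (v j - v i) := by
  simp only [dotProduct, Matrix.mulVec, Finset.mul_sum, weylKernel, Matrix.of_apply,
    Pi.star_apply, RCLike.star_def]
  exact Finset.sum_congr rfl fun i _ => Finset.sum_congr rfl fun j _ => by ring

theorem sigmaPosDef_iff_posSemidef_weylKernel [Module ℝ V] {σ : V → V → ℝ} {φ : V → ℂ} :
    SigmaPosDef σ φ ↔ ∀ n (v : Fin n → V), (weylKernel σ φ v).PosSemidef := by
  simp only [SigmaPosDef, ← star_dotProduct_weylKernel_mulVec, @eq_comm _ _ (0 : ℝ),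
    ← Complex.nonneg_iff]
  exact forall₂_congr fun n v =>
    ⟨Matrix.posSemidef_of_forall_star_dotProduct_mulVec_nonneg, fun h => h.dotProduct_mulVec_nonneg⟩

end WeylKernel

section TwistedSum

variable {H L : Type*} [AddCommGroup H] [Module ℝ H] [AddCommGroup L] [Module ℝ L]

def twistedSum (σH : H → H → ℝ) (σL : L → L → ℝ) (α : H →ₗ[ℝ] L →ₗ[ℝ] ℝ) :
    H × L → H × L → ℝ :=
  fun v w => σH v.1 w.1 + σL v.2 w.2 + α v.1 w.2 - α w.1 v.2

open Classical in
noncomputable def twistVector (α : H →ₗ[ℝ] L →ₗ[ℝ] ℝ) (v : H × L) :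
    lp (fun _ : H →ₗ[ℝ] ℝ => ℂ) 2 :=
  lp.single 2 (α.flip v.2) (Complex.exp (-(Complex.I / 2) * (α v.1 v.2 : ℂ)))

theorem weylKernel_twistedSum {ι : Type*} (σH : H → H → ℝ) (σL : L → L → ℝ)
    (α : H →ₗ[ℝ] L →ₗ[ℝ] ℝ) {φH : H → ℂ} {φL : L → ℂ}
    (hvanish : ∀ l : L, ¬ (∀ h : H, α h l = 0) → φL l = 0) (v : ι → H × L) :
    weylKernel (twistedSum σH σL α) (fun w => φH w.1 * φL w.2) v =
      Matrix.gram ℂ (twistVector α ∘ v) ⊙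
        (weylKernel σH φH (Prod.fst ∘ v) ⊙ weylKernel σL φL (Prod.snd ∘ v)) := by
  classical
  ext i j
  simp only [weylKernel, twistedSum, twistVector, Matrix.hadamard_apply, Matrix.gram_apply,
    Matrix.of_apply, Function.comp_apply, lp.inner_single_single, Prod.fst_sub, Prod.snd_sub]
  split_ifs with hij
  · have hi : α (v i).1 (v j).2 = α (v i).1 (v i).2 := (LinearMap.congr_fun hij (v i).1).symm
    have hj : α (v j).1 (v i).2 = α (v j).1 (v j).2 := LinearMap.congr_fun hij (v j).1
    have hphase : ∀ s t a b : ℝ, Complex.exp (Complex.I / 2 * ↑(s + t + a - b)) =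
        conj (Complex.exp (-(Complex.I / 2) * a)) * Complex.exp (-(Complex.I / 2) * b) *
          Complex.exp (Complex.I / 2 * s) * Complex.exp (Complex.I / 2 * t) := fun s t a b => by
      simp only [← Complex.exp_conj, ← Complex.exp_add, map_mul, map_neg, map_div₀,
        Complex.conj_I, Complex.conj_ofReal, map_ofNat]
      push_cast
      ring_nf
    rw [hi, hj, hphase]
    ring
  · have hφL : φL ((v j).2 - (v i).2) = 0 := hvanish _ fun h0 => hij <| LinearMap.ext fun h =>
      (sub_eq_zero.1 <| (map_sub (α h) _ _).symm.trans (h0 h)).symm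
    simp [hφL]

theorem posSemidef_weylKernel_twistedSum {ι : Type*} [Finite ι] (σH : H → H → ℝ)
    (σL : L → L → ℝ) (α : H →ₗ[ℝ] L →ₗ[ℝ] ℝ) {φH : H → ℂ} {φL : L → ℂ}
    (hvanish : ∀ l : L, ¬ (∀ h : H, α h l = 0) → φL l = 0) (v : ι → H × L)
    (hH : (weylKernel σH φH (Prod.fst ∘ v)).PosSemidef)
    (hL : (weylKernel σL φL (Prod.snd ∘ v)).PosSemidef) :
    (weylKernel (twistedSum σH σL α) (fun w => φH w.1 * φL w.2) v).PosSemidef := by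
  rw [weylKernel_twistedSum σH σL α hvanish]
  exact (Matrix.posSemidef_gram ℂ _).hadamard (hH.hadamard hL)

end TwistedSum

theorem stmt_17_general {H L : Type*} [AddCommGroup H] [Module ℝ H] [AddCommGroup L] [Module ℝ L]
    (σH : H →ₗ[ℝ] H →ₗ[ℝ] ℝ) (σL : L →ₗ[ℝ] L →ₗ[ℝ] ℝ) (α : H →ₗ[ℝ] L →ₗ[ℝ] ℝ)
    (φH : H → ℂ) (φL : L → ℂ)
    (hφH : SigmaPosDef (fun x y => σH x y) φH)
    (hφL : SigmaPosDef (fun x y => σL x y) φL)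
    (hvanish : ∀ l : L, ¬ (∀ h : H, α h l = 0) → φL l = 0) :
    SigmaPosDef
      (fun v w : H × L => σH v.1 w.1 + σL v.2 w.2 + α v.1 w.2 - α w.1 v.2)
      (fun v : H × L => φH v.1 * φL v.2) := by
  rw [sigmaPosDef_iff_posSemidef_weylKernel] at hφH hφL ⊢
  intro n v
  exact posSemidef_weylKernel_twistedSum (fun x y => σH x y) (fun x y => σL x y) α hvanish v
    (hφH n _) (hφL n _)

/-- (Product states on twisted sums of symplectic spaces.)  Let
`σ_H`, `σ_L` be alternating bilinear forms on `H`, `L`, and `α : H × L → ℝ` bilinear.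
On `V = H × L` define
`σ_V((h,l),(h′,l′)) = σ_H(h,h′) + σ_L(l,l′) + α(h,l′) − α(h′,l)` and let
`L₀ = {l : α(·,l) ≡ 0}`.  If `φ_H` is `σ_H`-positive-definite and `φ_L` is
`σ_L`-positive-definite vanishing off `L₀`, then `φ(h,l) = φ_H(h)·φ_L(l)` is
`σ_V`-positive-definite. -/
theorem stmt_17 {H L : Type*} [AddCommGroup H] [Module ℝ H] [AddCommGroup L] [Module ℝ L]
    (σH : H →ₗ[ℝ] H →ₗ[ℝ] ℝ) (σL : L →ₗ[ℝ] L →ₗ[ℝ] ℝ) (α : H →ₗ[ℝ] L →ₗ[ℝ] ℝ)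
    (hσH : ∀ h, σH h h = 0) (hσL : ∀ l, σL l l = 0)
    (φH : H → ℂ) (φL : L → ℂ)
    (hφH : SigmaPosDef (fun x y => σH x y) φH)
    (hφL : SigmaPosDef (fun x y => σL x y) φL)
    (hvanish : ∀ l : L, ¬ (∀ h : H, α h l = 0) → φL l = 0) :
    SigmaPosDef
      (fun v w : H × L => σH v.1 w.1 + σL v.2 w.2 + α v.1 w.2 - α w.1 v.2)
      (fun v : H × L => φH v.1 * φL v.2) :=
  stmt_17_general σH σL α φH φL hφH hφL hvanish
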